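/- Let V be a finite type, ι a finite type, N a natural number, and E : ι → Finset V a family of hyperedges with (E e).card = N for every e, with incidence matrix B ∈ Matrix V ι ℕ (B v e = 1 if v ∈ E e, else 0). Then the total number of pairs (i, j) with (B * Bᵀ) i j ≠ 0 is at most N^2 * Fintype.card ι. -/

import Mathlib

/-!
Every nonzero entry `(B * Bᵀ) i j = ∑ₑ B i e * B j e` comes from a hyperedge `e` containing both
`i` and `j`, so the support of `B * Bᵀ` is covered by the squares `E e ×ˢ E e`, each of size `N²`.
-/

open Matrix Finset

theorem Matrix.exists_ne_zero_of_mul_apply_ne_zero {l m n α : Type*} [Fintype m]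
    [NonUnitalNonAssocSemiring α] {A : Matrix l m α} {C : Matrix m n α} {i : l} {j : n}
    (h : (A * C) i j ≠ 0) : ∃ k, A i k ≠ 0 ∧ C k j ≠ 0 := by
  obtain ⟨k, -, hk⟩ := Finset.exists_ne_zero_of_sum_ne_zero (mul_apply (M := A) ▸ h)
  exact ⟨k, left_ne_zero_of_mul hk, right_ne_zero_of_mul hk⟩

theorem Matrix.filter_mul_transpose_ne_zero_subset_biUnion {V ι α : Type*} [Fintype V]
    [Fintype ι] [DecidableEq V] [NonUnitalCommSemiring α] [DecidableEq α]
    {B : Matrix V ι α} {E : ι → Finset V} (hB : ∀ v e, B v e ≠ 0 → v ∈ E e) :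
    univ.filter (fun p : V × V => (B * Bᵀ) p.1 p.2 ≠ 0) ⊆ univ.biUnion fun e => E e ×ˢ E e := by
  intro p hp
  obtain ⟨e, hi, hj⟩ := exists_ne_zero_of_mul_apply_ne_zero (mem_filter.mp hp).2
  exact mem_biUnion.mpr ⟨e, mem_univ e, mem_product.mpr ⟨hB _ _ hi, hB _ _ hj⟩⟩

theorem Finset.card_biUnion_product_self_le {V ι : Type*} [Fintype ι] [DecidableEq V]
    {E : ι → Finset V} {N : ℕ} (hE : ∀ e, #(E e) ≤ N) :
    #(univ.biUnion fun e => E e ×ˢ E e) ≤ N ^ 2 * Fintype.card ι :=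
  calc #(univ.biUnion fun e => E e ×ˢ E e)
      ≤ ∑ e, #(E e ×ˢ E e) := card_biUnion_le
    _ ≤ ∑ _e : ι, N ^ 2 := sum_le_sum fun e _ => by
        rw [card_product, sq]
        exact Nat.mul_le_mul (hE e) (hE e)
    _ = N ^ 2 * Fintype.card ι := by rw [sum_const, card_univ, smul_eq_mul, mul_comm]

/-- Space complexity of clique-expanded graph construction: `B * Bᵀ` has at most
`N² * |ι|` nonzero entries for an `N`-uniform hypergraph. -/
theorem incidence_mul_transpose_nnz_le {V ι : Type*} [Fintype V] [Fintype ι] [DecidableEq V]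
    (N : ℕ) (E : ι → Finset V) (hE : ∀ e, (E e).card = N)
    (B : Matrix V ι ℕ) (hB : ∀ v e, B v e = if v ∈ E e then 1 else 0) :
    (Finset.univ.filter (fun p : V × V => (B * Bᵀ) p.1 p.2 ≠ 0)).card
      ≤ N ^ 2 * Fintype.card ι := by
  have hsupp : ∀ v e, B v e ≠ 0 → v ∈ E e := fun v e h => by
    by_contra hv
    exact h (by rw [hB, if_neg hv])
  exact (card_le_card (filter_mul_transpose_ne_zero_subset_biUnion hsupp)).trans
    (card_biUnion_product_self_le fun e => (hE e).le)
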